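/- arXiv:2206.04402 — 2 statements merged into one kernel-verified Lean document; each statement's English description precedes it below -/
import Mathlib

section
/- For all n ≥ 0, (x)_{n,λ} = ∑_{j=0}^{n} C(n,j) · (j!/(j+r)!) · (1)_{j+r,λ} · β_{n-j,λ}^{[r-1,1]}(x), where β_{m,λ}^{[r-1,1]}(x) are the r-truncated degenerate Bernoulli polynomials (order 1). In particular β_{0,λ}^{[r-1,1]} = r!/(1)_{r,λ}. -/
/-- Degenerate falling factorial `(x)_{n,μ} = ∏_{j=0}^{n-1} (x - jμ)`. -/
noncomputable def dfall (x mu : ℝ) (n : ℕ) : ℝ := ∏ j ∈ Finset.range n, (x - j * mu)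

/-- The degenerate exponential `e_λ^x(t) = (1+λt)^{x/λ} = ∑_n (x)_{n,λ} t^n/n!`
as a formal power series. -/
noncomputable def degExpPS (lam x : ℝ) : PowerSeries ℝ :=
  PowerSeries.mk fun n => dfall x lam n / n.factorial

/-- The truncation `∑_{l=0}^{r-1} (1)_{l,λ} t^l / l!`. -/
noncomputable def truncPoly (lam : ℝ) (r : ℕ) : PowerSeries ℝ :=
  ∑ l ∈ Finset.range r, PowerSeries.C (R := ℝ) (dfall 1 lam l / l.factorial) * PowerSeries.X ^ l

/-- The `r`-truncated degenerate Stirling numbers of the second kind `S_{2,λ}^{[r]}(n, kr)`,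
defined by `(1/k!)(e_λ(t) - ∑_{l<r} (1)_{l,λ} t^l/l!)^k = ∑_n S_{2,λ}^{[r]}(n,kr) t^n/n!`
(the coefficients below `n = kr` vanish automatically). -/
noncomputable def truncS (lam : ℝ) (r k n : ℕ) : ℝ :=
  n.factorial * ((k.factorial : ℝ)⁻¹ *
    PowerSeries.coeff (R := ℝ) n ((degExpPS lam 1 - truncPoly lam r) ^ k))

/-- The degenerate Stirling numbers of the second kind `S_{2,λ}(n,k)`, defined by
`(1/k!)(e_λ(t)-1)^k = ∑_{n≥k} S_{2,λ}(n,k) t^n/n!`. -/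
noncomputable def S2 (lam : ℝ) (n k : ℕ) : ℝ :=
  n.factorial * ((k.factorial : ℝ)⁻¹ * PowerSeries.coeff (R := ℝ) n ((degExpPS lam 1 - 1) ^ k))

lemma coeff_A (lam : ℝ) (r i : ℕ) :
    PowerSeries.coeff (R := ℝ) i (degExpPS lam 1 - truncPoly lam r) =
      if r ≤ i then dfall 1 lam i / i.factorial else 0 := by
  have ht : PowerSeries.coeff (R := ℝ) i (truncPoly lam r) =
      if i < r then dfall 1 lam i / i.factorial else 0 := by
    unfold truncPoly
    rw [map_sum]
    simp [PowerSeries.coeff_C_mul, PowerSeries.coeff_X_pow, eq_comm]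
  rw [map_sub, ht]
  simp only [degExpPS, PowerSeries.coeff_mk]
  split_ifs <;> first | omega | ring

/-- Expansion of `(x)_{n,λ}` in terms of the `r`-truncated degenerate Bernoulli polynomials
`β_{m,λ}^{[r-1,1]}(x)` (given by `b x m`, defined via the generating relation `hb`);
in particular `β_{0,λ}^{[r-1,1]} = r!/(1)_{r,λ}`. -/
theorem dfall_eq_sum_truncBernoulliPoly (lam : ℝ) (hlam : lam ≠ 0) (r : ℕ) (hr : 0 < r)
    (b : ℝ → ℕ → ℝ)
    (hb : ∀ x : ℝ, (PowerSeries.X : PowerSeries ℝ) ^ r * degExpPS lam x =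
      (degExpPS lam 1 - truncPoly lam r) *
        PowerSeries.mk (fun n => b x n / n.factorial)) :
    (∀ x : ℝ, ∀ n : ℕ, dfall x lam n =
      ∑ j ∈ Finset.range (n + 1),
        (n.choose j : ℝ) * (j.factorial : ℝ) / ((j + r).factorial : ℝ) *
          dfall 1 lam (j + r) * b x (n - j)) ∧
    (dfall 1 lam r ≠ 0 → b 0 0 = (r.factorial : ℝ) / dfall 1 lam r) := by
  have key : ∀ x : ℝ, ∀ n : ℕ, dfall x lam n =
      ∑ j ∈ Finset.range (n + 1),
        (n.choose j : ℝ) * (j.factorial : ℝ) / ((j + r).factorial : ℝ) *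
          dfall 1 lam (j + r) * b x (n - j) := by
    intro x n
    have h := congrArg (PowerSeries.coeff (R := ℝ) (n + r)) (hb x)
    rw [PowerSeries.coeff_X_pow_mul, PowerSeries.coeff_mul,
      Finset.Nat.sum_antidiagonal_eq_sum_range_succ_mk] at h
    simp only [coeff_A] at h
    simp only [degExpPS, PowerSeries.coeff_mk] at h
    -- split the sum: terms with k < r vanish
    rw [Finset.range_eq_Ico, ← Finset.sum_Ico_consecutive _ (Nat.zero_le r)
      (by omega : r ≤ n + r + 1)] at h
    have hz : ∑ k ∈ Finset.Ico 0 r, ((if r ≤ k then dfall 1 lam k / k.factorial else 0) *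
        (b x (n + r - k) / (n + r - k).factorial)) = 0 := by
      apply Finset.sum_eq_zero
      intro k hk
      simp only [Finset.mem_Ico] at hk
      rw [if_neg (by omega)]
      ring
    rw [hz, zero_add, Finset.sum_Ico_eq_sum_range] at h
    have hrange : n + r + 1 - r = n + 1 := by omega
    rw [hrange] at h
    have h2 : dfall x lam n / n.factorial =
        ∑ j ∈ Finset.range (n + 1), dfall 1 lam (r + j) / (r + j).factorial *
          (b x (n - j) / (n - j).factorial) := by
      rw [h]
      apply Finset.sum_congr rfl
      intro j hj
      rw [if_pos (by omega : r ≤ r + j)]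
      have : n + r - (r + j) = n - j := by omega
      rw [this]
    have hn : (0:ℝ) < n.factorial := by positivity
    calc dfall x lam n = n.factorial * (dfall x lam n / n.factorial) := by field_simp
      _ = _ := by
        rw [h2, Finset.mul_sum]
        apply Finset.sum_congr rfl
        intro j hj
        simp only [Finset.mem_range] at hj
        have hj' : j ≤ n := by omega
        have hfac : (n.factorial : ℝ) = (n.choose j : ℝ) * j.factorial * (n - j).factorial := by
          rw_mod_cast [← Nat.choose_mul_factorial_mul_factorial hj']
        have hjr : ((j + r).factorial : ℝ) ≠ 0 := by positivity
        have hnj : ((n - j).factorial : ℝ) ≠ 0 := by positivity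
        rw [hfac, add_comm r j]
        field_simp
  refine ⟨key, fun hd => ?_⟩
  have h0 := key 0 0
  simp only [Finset.range_one, Finset.sum_singleton, Nat.choose_self, Nat.factorial_zero,
    Nat.cast_one, zero_add, Nat.sub_zero] at h0
  have : dfall 0 lam 0 = 1 := by simp [dfall]
  rw [this] at h0
  have hrf : ((r.factorial : ℝ)) ≠ 0 := by positivity
  field_simp at h0 ⊢
  linarith [h0]
end

section
/- For n,k ≥ 1 with n ≥ k: ∑_{j=0}^{n} C(n+k-1, j) S_{2,λ}^{[2]}(n-j+k, 2k) β_{j,λ} = (n+k-1)! [ ∑_{l=k}^{n} (S_{2,λ}^{[2]}(l+k-2, 2k-2)/(l+k-2)!) (-λ)^{n-l} + ∑_{j=k}^{n} ∑_{l=k}^{j} (S_{2,λ}^{[2]}(l+k-2, 2k-2) β_{n-j,λ} (-λ)^{j-l+1}) / ((l+k-2)! (n-j)!) ]. -/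
open PowerSeries Finset

noncomputable def auxVs (lam : ℝ) : PowerSeries ℝ := PowerSeries.mk fun i => (-lam) ^ i

lemma dfall_succ (x mu : ℝ) (m : ℕ) : dfall x mu (m+1) = dfall x mu m * (x - m * mu) :=
  Finset.prod_range_succ _ _

lemma coeff_degExp (lam x : ℝ) (m : ℕ) :
    PowerSeries.coeff (R := ℝ) m (degExpPS lam x) = dfall x lam m / m.factorial :=
  PowerSeries.coeff_mk _ _

lemma truncPoly_two (lam : ℝ) : truncPoly lam 2 = 1 + PowerSeries.X := by
  simp [truncPoly, Finset.sum_range_succ, dfall]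

lemma U_mul_Vs (lam : ℝ) : (1 + PowerSeries.C (R := ℝ) lam * PowerSeries.X) * auxVs lam = 1 := by
  ext m
  rw [add_mul, one_mul, mul_assoc, map_add]
  cases m with
  | zero => simp [auxVs]
  | succ m =>
      rw [PowerSeries.coeff_C_mul, PowerSeries.coeff_succ_X_mul]
      simp [auxVs, pow_succ]
      ring

lemma U_mul_deriv (lam : ℝ) :
    (1 + PowerSeries.C (R := ℝ) lam * PowerSeries.X) * (d⁄dX ℝ) (degExpPS lam 1) = degExpPS lam 1 := by
  ext m
  rw [add_mul, one_mul, mul_assoc, map_add]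
  cases m with
  | zero =>
      simp [PowerSeries.coeff_derivative, coeff_degExp, dfall]
  | succ m =>
      rw [PowerSeries.coeff_C_mul, PowerSeries.coeff_succ_X_mul,
        PowerSeries.coeff_derivative, PowerSeries.coeff_derivative,
        coeff_degExp, coeff_degExp]
      rw [dfall_succ 1 lam (m+1), Nat.factorial_succ (m+1)]
      have h1 : ((m+1).factorial : ℝ) ≠ 0 := Nat.cast_ne_zero.2 (Nat.factorial_ne_zero _)
      have h2 : ((m:ℝ)+1+1) ≠ 0 := by positivity
      push_cast
      field_simp
      ring

lemma deriv_sub_one (lam : ℝ) :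
    (d⁄dX ℝ) (degExpPS lam 1) - 1 =
      (degExpPS lam 1 - 1 - PowerSeries.C (R := ℝ) lam * PowerSeries.X) * auxVs lam := by
  have h : (degExpPS lam 1 - 1 - PowerSeries.C (R := ℝ) lam * PowerSeries.X) =
      (1 + PowerSeries.C (R := ℝ) lam * PowerSeries.X) * ((d⁄dX ℝ) (degExpPS lam 1) - 1) := by
    rw [mul_sub, U_mul_deriv, mul_one]; ring
  rw [h, mul_comm (1 + PowerSeries.C (R := ℝ) lam * PowerSeries.X), mul_assoc, U_mul_Vs, mul_one]

lemma core_identity (lam : ℝ) (B : PowerSeries ℝ)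
    (hb : (PowerSeries.X : PowerSeries ℝ) = (degExpPS lam 1 - 1) * B) :
    ((d⁄dX ℝ) (degExpPS lam 1) - 1) * B =
      PowerSeries.X * auxVs lam - PowerSeries.C (R := ℝ) lam * (PowerSeries.X * (auxVs lam * B)) := by
  rw [deriv_sub_one]
  calc (degExpPS lam 1 - 1 - PowerSeries.C (R := ℝ) lam * PowerSeries.X) * auxVs lam * B
      = ((degExpPS lam 1 - 1) * B) * auxVs lam
        - PowerSeries.C (R := ℝ) lam * (PowerSeries.X * (auxVs lam * B)) := by ring
    _ = _ := by rw [← hb]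

lemma Xsq_dvd (lam : ℝ) :
    (PowerSeries.X : PowerSeries ℝ) ^ 2 ∣ (degExpPS lam 1 - truncPoly lam 2) := by
  rw [PowerSeries.X_pow_dvd_iff]
  intro m hm
  interval_cases m
  · rw [map_sub, truncPoly_two, map_add, coeff_degExp]
    simp [dfall]
  · rw [map_sub, truncPoly_two, map_add, coeff_degExp]
    simp [dfall, Finset.prod_range_succ]

lemma coeff_Wpow_mul_eq_zero (lam : ℝ) (k m : ℕ) (Q : PowerSeries ℝ) (hm : m < 2 * k) :
    PowerSeries.coeff (R := ℝ) m ((degExpPS lam 1 - truncPoly lam 2) ^ k * Q) = 0 := by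
  have h : (PowerSeries.X : PowerSeries ℝ) ^ (2 * k) ∣
      (degExpPS lam 1 - truncPoly lam 2) ^ k * Q := by
    rw [pow_mul]
    exact Dvd.dvd.mul_right (pow_dvd_pow_of_dvd (Xsq_dvd lam) k) Q
  exact (PowerSeries.X_pow_dvd_iff.1 h) m hm

lemma coeff_Wpow_eq_zero (lam : ℝ) (k m : ℕ) (hm : m < 2 * k) :
    PowerSeries.coeff (R := ℝ) m ((degExpPS lam 1 - truncPoly lam 2) ^ k) = 0 := by
  simpa using coeff_Wpow_mul_eq_zero lam k m 1 hm

lemma coeff_mul_range (f g : PowerSeries ℝ) (N : ℕ) :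
    PowerSeries.coeff (R := ℝ) N (f*g) =
      ∑ i ∈ range (N+1), PowerSeries.coeff (R := ℝ) i f * PowerSeries.coeff (R := ℝ) (N-i) g := by
  rw [PowerSeries.coeff_mul, Finset.Nat.sum_antidiagonal_eq_sum_range_succ_mk]

lemma fac_ne (j : ℕ) : ((j.factorial : ℝ)) ≠ 0 := Nat.cast_ne_zero.2 (Nat.factorial_ne_zero j)

lemma truncS_div_fac (lam : ℝ) (k M : ℕ) :
    truncS lam 2 k M / (M.factorial : ℝ) =
      ((k.factorial : ℝ))⁻¹ * PowerSeries.coeff (R := ℝ) M ((degExpPS lam 1 - truncPoly lam 2) ^ k) := by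
  rw [truncS]
  field_simp

-- coefficient split lemma
lemma hsplit (lam : ℝ) (k' i : ℕ) :
    PowerSeries.coeff (R := ℝ) (2*k'+i) ((degExpPS lam 1 - truncPoly lam 2) ^ k' * auxVs lam) =
      ∑ i' ∈ range (i+1),
        PowerSeries.coeff (R := ℝ) (2*k'+i') ((degExpPS lam 1 - truncPoly lam 2) ^ k') *
          (-lam) ^ (i - i') := by
  rw [show 2*k'+i = 2*k' + i from rfl, coeff_mul_range]
  rw [show 2*k'+i+1 = 2*k' + (i+1) from by omega, Finset.sum_range_add]
  rw [Finset.sum_eq_zero (fun i0 hi0 => by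
    rw [coeff_Wpow_eq_zero lam k' i0 (Finset.mem_range.1 hi0)]; ring), zero_add]
  refine Finset.sum_congr rfl fun i' hi' => ?_
  have hi' := Finset.mem_range.1 hi'
  rw [show 2*k'+i - (2*k'+i') = i - i' from by omega]
  congr 1
  exact PowerSeries.coeff_mk _ _

/-- Theorem 6: for `n, k ≥ 1` with `n ≥ k`, an identity connecting the 2-truncated degenerate
Stirling numbers of the second kind (`truncS lam 2`, where `S_{2,λ}^{[2]}(m, 2k-2)` is
`truncS lam 2 (k-1) m`) and the degenerate Bernoulli numbers `β_{j,λ} = b j`. -/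
theorem trunc2S_degBernoulli_identity' (lam : ℝ) (hlam : lam ≠ 0) (b : ℕ → ℝ)
    (hb : (PowerSeries.X : PowerSeries ℝ) =
      (degExpPS lam 1 - 1) * PowerSeries.mk (fun n => b n / n.factorial))
    (n k : ℕ) (hk : 1 ≤ k) (hn : k ≤ n) :
    ∑ j ∈ Finset.range (n + 1),
        ((n + k - 1).choose j : ℝ) * truncS lam 2 k (n - j + k) * b j =
      ((n + k - 1).factorial : ℝ) *
        ((∑ l ∈ Finset.Icc k n,
            truncS lam 2 (k - 1) (l + k - 2) / (((l + k - 2).factorial : ℝ)) * (-lam) ^ (n - l)) +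
          ∑ j ∈ Finset.Icc k n, ∑ l ∈ Finset.Icc k j,
            truncS lam 2 (k - 1) (l + k - 2) * b (n - j) * (-lam) ^ (j - l + 1) /
              (((l + k - 2).factorial : ℝ) * ((n - j).factorial : ℝ))) := by
  obtain ⟨k', rfl⟩ : ∃ k', k = k' + 1 := ⟨k - 1, by omega⟩
  obtain ⟨d, rfl⟩ : ∃ d, n = k' + d + 1 := ⟨n - k' - 1, by omega⟩
  have hWdef : True := trivial
  simp only [show k' + d + 1 + (k' + 1) - 1 = 2*k'+d+1 from by omega, Nat.add_sub_cancel]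
  have hP1 : (∑ l ∈ Finset.Icc (k'+1) (k'+d+1),
      truncS lam 2 k' (l + (k'+1) - 2) / (((l + (k'+1) - 2).factorial : ℝ)) *
        (-lam) ^ (k'+d+1 - l)) =
      ((k'.factorial : ℝ))⁻¹ * PowerSeries.coeff (R := ℝ) (2*k'+d) ((degExpPS lam 1 - truncPoly lam 2) ^ k' * auxVs lam) := by
    rw [hsplit lam k' d, ← Finset.Ico_add_one_right_eq_Icc, Finset.sum_Ico_eq_sum_range,
      show k'+d+1+1 - (k'+1) = d+1 from by omega, Finset.mul_sum]
    refine Finset.sum_congr rfl fun i hi => ?_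
    have hi := Finset.mem_range.1 hi
    rw [show k'+1+i + (k'+1) - 2 = 2*k'+i from by omega,
      show k'+d+1 - (k'+1+i) = d - i from by omega, truncS_div_fac]
    ring
  have hP2 : (∑ j ∈ Finset.Icc (k'+1) (k'+d+1), ∑ l ∈ Finset.Icc (k'+1) j,
      truncS lam 2 k' (l + (k'+1) - 2) * b (k'+d+1 - j) * (-lam) ^ (j - l + 1) /
        (((l + (k'+1) - 2).factorial : ℝ) * (((k'+d+1 - j).factorial : ℝ)))) =
      -lam * (((k'.factorial : ℝ))⁻¹ * PowerSeries.coeff (R := ℝ) (2*k'+d) ((degExpPS lam 1 - truncPoly lam 2) ^ k' * auxVs lam * PowerSeries.mk (fun n => b n / n.factorial))) := by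
    have hR : PowerSeries.coeff (R := ℝ) (2*k'+d) ((degExpPS lam 1 - truncPoly lam 2) ^ k' * auxVs lam * PowerSeries.mk (fun n => b n / n.factorial)) =
        ∑ i ∈ range (d+1), (∑ i' ∈ range (i+1),
          PowerSeries.coeff (R := ℝ) (2*k'+i') ((degExpPS lam 1 - truncPoly lam 2) ^ k') * (-lam) ^ (i - i')) *
            (b (d-i) / (((d-i).factorial : ℝ))) := by
      rw [coeff_mul_range, show 2*k'+d+1 = 2*k' + (d+1) from by omega, Finset.sum_range_add]
      rw [Finset.sum_eq_zero (fun i0 hi0 => by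
        rw [coeff_Wpow_mul_eq_zero lam k' i0 _ (Finset.mem_range.1 hi0)]; ring), zero_add]
      refine Finset.sum_congr rfl fun i hi => ?_
      rw [hsplit, show 2*k'+d - (2*k'+i) = d - i from by omega]
      congr 1
      exact PowerSeries.coeff_mk _ _
    rw [hR, Finset.mul_sum, Finset.mul_sum]
    rw [← Finset.Ico_add_one_right_eq_Icc, Finset.sum_Ico_eq_sum_range,
      show k'+d+1+1 - (k'+1) = d+1 from by omega]
    refine Finset.sum_congr rfl fun i hi => ?_
    have hi := Finset.mem_range.1 hi
    rw [Finset.sum_mul, Finset.mul_sum, Finset.mul_sum]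
    rw [← Finset.Ico_add_one_right_eq_Icc, Finset.sum_Ico_eq_sum_range,
      show k'+1+i+1 - (k'+1) = i+1 from by omega]
    refine Finset.sum_congr rfl fun i' hi' => ?_
    have hi' := Finset.mem_range.1 hi'
    rw [show k'+1+i' + (k'+1) - 2 = 2*k'+i' from by omega,
      show k'+d+1 - (k'+1+i) = d - i from by omega,
      show (k'+1+i) - (k'+1+i') + 1 = (i - i') + 1 from by omega, truncS]
    have h1 := fac_ne (2*k'+i')
    have h2 := fac_ne (d-i)
    field_simp
    ring
  have hL : (∑ j ∈ Finset.range (k'+d+1+1),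
      (((2*k'+d+1).choose j : ℝ)) * truncS lam 2 (k'+1) (k'+d+1 - j + (k'+1)) * b j) =
      (((2*k'+d+1).factorial : ℝ)) * ((k'.factorial : ℝ))⁻¹ *
        (PowerSeries.coeff (R := ℝ) (2*k'+d) ((degExpPS lam 1 - truncPoly lam 2) ^ k' * auxVs lam) -
          lam * PowerSeries.coeff (R := ℝ) (2*k'+d) ((degExpPS lam 1 - truncPoly lam 2) ^ k' * auxVs lam * PowerSeries.mk (fun n => b n / n.factorial))) := by
    have hcore := core_identity lam (PowerSeries.mk fun n => b n / n.factorial) hb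
    have hDW : (d⁄dX ℝ) (degExpPS lam 1 - truncPoly lam 2) = (d⁄dX ℝ) (degExpPS lam 1) - 1 := by
      rw [truncPoly_two, map_sub, map_add, PowerSeries.derivative_X,
        Derivation.map_one_eq_zero, zero_add]
    have hprod : (PowerSeries.mk fun n => b n / n.factorial) * ((degExpPS lam 1 - truncPoly lam 2) ^ k' * ((d⁄dX ℝ) (degExpPS lam 1) - 1)) =
        PowerSeries.X * ((degExpPS lam 1 - truncPoly lam 2) ^ k' * auxVs lam) -
          PowerSeries.C (R := ℝ) lam * (PowerSeries.X * ((degExpPS lam 1 - truncPoly lam 2) ^ k' * auxVs lam * (PowerSeries.mk fun n => b n / n.factorial))) := by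
      calc (PowerSeries.mk fun n => b n / n.factorial) * ((degExpPS lam 1 - truncPoly lam 2) ^ k' * ((d⁄dX ℝ) (degExpPS lam 1) - 1))
          = (degExpPS lam 1 - truncPoly lam 2) ^ k' * (((d⁄dX ℝ) (degExpPS lam 1) - 1) * (PowerSeries.mk fun n => b n / n.factorial)) := by ring
        _ = (degExpPS lam 1 - truncPoly lam 2) ^ k' * (PowerSeries.X * auxVs lam -
              PowerSeries.C (R := ℝ) lam * (PowerSeries.X * (auxVs lam * (PowerSeries.mk fun n => b n / n.factorial)))) := by rw [hcore]
        _ = _ := by ring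
    have hWk : PowerSeries.coeff (R := ℝ) (2*k'+d+1)
        ((PowerSeries.mk fun n => b n / n.factorial) * (d⁄dX ℝ) ((degExpPS lam 1 - truncPoly lam 2) ^ (k'+1))) =
        ((k' : ℝ) + 1) * (PowerSeries.coeff (R := ℝ) (2*k'+d) ((degExpPS lam 1 - truncPoly lam 2) ^ k' * auxVs lam) -
          lam * PowerSeries.coeff (R := ℝ) (2*k'+d) ((degExpPS lam 1 - truncPoly lam 2) ^ k' * auxVs lam * (PowerSeries.mk fun n => b n / n.factorial))) := by
      rw [Derivation.leibniz_pow, Nat.add_sub_cancel, smul_eq_mul, mul_smul_comm,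
        map_nsmul, nsmul_eq_mul, hDW, hprod, map_sub, PowerSeries.coeff_C_mul,
        PowerSeries.coeff_succ_X_mul, PowerSeries.coeff_succ_X_mul]
      push_cast
      ring
    have hhead : ∀ j ∈ Finset.range (k'+d+1+1),
        (((2*k'+d+1).choose j : ℝ)) * truncS lam 2 (k'+1) (k'+d+1 - j + (k'+1)) * b j =
          (((2*k'+d+1).factorial : ℝ)) * (((k'+1).factorial : ℝ))⁻¹ *
            (PowerSeries.coeff (R := ℝ) j (PowerSeries.mk fun n => b n / n.factorial) *
              PowerSeries.coeff (R := ℝ) (2*k'+d+1-j) ((d⁄dX ℝ) ((degExpPS lam 1 - truncPoly lam 2) ^ (k'+1)))) := by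
      intro j hj
      have hj := Finset.mem_range.1 hj
      rw [PowerSeries.coeff_derivative, PowerSeries.coeff_mk,
        show k'+d+1 - j + (k'+1) = (2*k'+d+1-j)+1 from by omega, truncS,
        Nat.cast_choose ℝ (show j ≤ 2*k'+d+1 from by omega),
        Nat.factorial_succ (2*k'+d+1-j)]
      have h1 := fac_ne j
      have h2 := fac_ne (2*k'+d+1-j)
      have h3 := fac_ne (2*k'+d+1)
      push_cast
      field_simp
    have hsum : PowerSeries.coeff (R := ℝ) (2*k'+d+1)
        ((PowerSeries.mk fun n => b n / n.factorial) * (d⁄dX ℝ) ((degExpPS lam 1 - truncPoly lam 2) ^ (k'+1))) =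
        ∑ j ∈ Finset.range (k'+d+1+1), PowerSeries.coeff (R := ℝ) j (PowerSeries.mk fun n => b n / n.factorial) *
          PowerSeries.coeff (R := ℝ) (2*k'+d+1-j) ((d⁄dX ℝ) ((degExpPS lam 1 - truncPoly lam 2) ^ (k'+1))) := by
      rw [coeff_mul_range, show 2*k'+d+1+1 = (k'+d+1+1) + k' from by omega,
        Finset.sum_range_add]
      have htail : ∀ i ∈ Finset.range k',
          PowerSeries.coeff (R := ℝ) (k'+d+1+1+i) (PowerSeries.mk fun n => b n / n.factorial) *
            PowerSeries.coeff (R := ℝ) (2*k'+d+1 - (k'+d+1+1+i))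
              ((d⁄dX ℝ) ((degExpPS lam 1 - truncPoly lam 2) ^ (k'+1))) = 0 := by
        intro i hi
        have hi := Finset.mem_range.1 hi
        rw [show 2*k'+d+1 - (k'+d+1+1+i) = k'-1-i from by omega,
          PowerSeries.coeff_derivative,
          show k'-1-i+1 = k'-i from by omega,
          coeff_Wpow_eq_zero lam (k'+1) (k'-i) (by omega)]
        ring
      rw [Finset.sum_eq_zero htail, add_zero]
    calc ∑ j ∈ Finset.range (k'+d+1+1),
        (((2*k'+d+1).choose j : ℝ)) * truncS lam 2 (k'+1) (k'+d+1 - j + (k'+1)) * b j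
        = ∑ j ∈ Finset.range (k'+d+1+1),
            (((2*k'+d+1).factorial : ℝ)) * (((k'+1).factorial : ℝ))⁻¹ *
              (PowerSeries.coeff (R := ℝ) j (PowerSeries.mk fun n => b n / n.factorial) *
                PowerSeries.coeff (R := ℝ) (2*k'+d+1-j)
                  ((d⁄dX ℝ) ((degExpPS lam 1 - truncPoly lam 2) ^ (k'+1)))) :=
          Finset.sum_congr rfl hhead
      _ = (((2*k'+d+1).factorial : ℝ)) * (((k'+1).factorial : ℝ))⁻¹ *
            PowerSeries.coeff (R := ℝ) (2*k'+d+1)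
              ((PowerSeries.mk fun n => b n / n.factorial) * (d⁄dX ℝ) ((degExpPS lam 1 - truncPoly lam 2) ^ (k'+1))) := by
          rw [hsum, Finset.mul_sum]
      _ = _ := by
          rw [hWk]
          have hfs : (((k'+1).factorial : ℝ)) = ((k' : ℝ) + 1) * ((k'.factorial : ℝ)) := by
            rw [Nat.factorial_succ]; push_cast; ring
          rw [hfs, mul_inv]
          have h4 : ((k' : ℝ) + 1) ≠ 0 := by positivity
          field_simp
  rw [hP1, hP2, hL]
  ring
end
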